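/- Let n ≥ 4 be even, D_{2n} = ⟨a, b | a^n = b² = 1, a^b = a^{−1}⟩, H ⊆ ⟨a²⟩ and K ⊆ a⟨a²⟩ with H = H^{−1}, K = K^{−1}, and set S = bH ∪ K. If D_{2n} has the |S|-DCI property, then K = ∅. -/

import Mathlib

/-- The Cayley digraph relation of `G` with connection set `S`:
there is an arc from `x` to `y` iff `y = s * x` for some `s ∈ S`. -/
def cayRel {G : Type*} [Group G] (S : Set G) : G → G → Prop :=
  fun x y => y * x⁻¹ ∈ S

/-- The automorphism group of the Cayley digraph `Cay(G,S)`,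
as a subgroup of the permutations of the vertex set `G`. -/
def cayAut {G : Type*} [Group G] (S : Set G) : Subgroup (Equiv.Perm G) where
  carrier := {f | ∀ x y, cayRel S (f x) (f y) ↔ cayRel S x y}
  one_mem' := by intro x y; rfl
  mul_mem' := by
    intro f g hf hg x y
    rw [Equiv.Perm.mul_apply, Equiv.Perm.mul_apply, hf, hg]
  inv_mem' := by
    intro f hf x y
    simpa [Equiv.Perm.inv_def, Equiv.apply_symm_apply] using (hf (f⁻¹ x) (f⁻¹ y)).symm

/-- `Cay(G,S)` is a CI-digraph: any isomorphic Cayley digraph `Cay(G,T)`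
is Cayley isomorphic to it. -/
def IsCIDigraph {G : Type*} [Group G] (S : Set G) : Prop :=
  ∀ T : Set G, (1 : G) ∉ T → Nonempty (cayRel S ≃r cayRel T) →
    ∃ α : G ≃* G, α '' S = T

/-- `G` has the `m`-DCI property: every Cayley digraph of `G` of out-valency `m`
is a CI-digraph. -/
def HasDCI (G : Type*) [Group G] (m : ℕ) : Prop :=
  ∀ S : Set G, (1 : G) ∉ S → S.ncard = m → IsCIDigraph S

/-- The right regular representation `R(G)` as a subgroup of `Perm G`. -/
def rightReg (G : Type*) [Group G] : Subgroup (Equiv.Perm G) where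
  carrier := Set.range fun g : G => Equiv.mulRight g
  one_mem' := ⟨1, by ext x; simp⟩
  mul_mem' := by
    rintro _ _ ⟨g, rfl⟩ ⟨h, rfl⟩
    exact ⟨h * g, by ext x; simp [mul_assoc]⟩
  inv_mem' := by
    rintro _ ⟨g, rfl⟩
    exact ⟨g⁻¹, by ext x; simp [Equiv.Perm.inv_def]⟩

/-- A subgroup of permutations of `V` is regular if for all `x y : V` there is a
unique element sending `x` to `y`. -/
def IsRegularSubgroup {V : Type*} (H : Subgroup (Equiv.Perm V)) : Prop :=
  ∀ x y : V, ∃! h : H, (h : Equiv.Perm V) x = y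

/-!
Let `N` be the index-two subgroup of `D_{2n}` formed by the elements `aⁱ` and `baⁱ` with `i` even.
The permutation of `D_{2n}` that fixes `N` pointwise and multiplies the other coset on the left by
`b` is a digraph isomorphism `Cay(D_{2n}, bH ∪ K) ≅ Cay(D_{2n}, bH ∪ bK)`. The DCI property then
yields an automorphism mapping `bH ∪ K` onto `bH ∪ bK`, a set of reflections, so it sends each
rotation in `K` to a reflection. Such a rotation has order two, hence is central, whereas for
`n ≥ 3` no reflection is.
-/

section IndexTwo

variable {G : Type*} [Group G] {b g : G} {X : Set G}

lemma mem_image_mul_left_iff_of_mul_self (hb : b * b = 1) :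
    g ∈ (b * ·) '' X ↔ b * g ∈ X := by
  rw [Set.image_mul_left, Set.mem_preimage, inv_eq_of_mul_eq_one_right hb]

variable {N : Subgroup G}

open Classical in
noncomputable def mulLeftOffSubgroup (N : Subgroup G) (b : G) (x : G) : G :=
  if x ∈ N then x else b * x

lemma mulLeftOffSubgroup_involutive (hbN : b ∈ N) (hb : b * b = 1) :
    Function.Involutive (mulLeftOffSubgroup N b) := by
  intro x
  by_cases hx : x ∈ N
  · simp only [mulLeftOffSubgroup, hx, if_true]
  · have hbx : b * x ∉ N := by rwa [Subgroup.mul_mem_cancel_left _ hbN]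
    simp only [mulLeftOffSubgroup, hx, hbx, if_false, ← mul_assoc, hb, one_mul]

theorem nonempty_relIso_cayRel_of_index_two (hN : N.index = 2) (hbN : b ∈ N) (hb : b * b = 1)
    {H K : Set G} (hHN : H ⊆ N) (hKN : ∀ k ∈ K, k ∉ N)
    (hHb : ∀ g, b * g * b ∈ H ↔ g ∈ H) (hKb : ∀ g, b * g * b ∈ K ↔ g ∈ K) :
    Nonempty (cayRel ((b * ·) '' H ∪ K) ≃r cayRel ((b * ·) '' H ∪ (b * ·) '' K)) := by
  have hb' : b⁻¹ = b := inv_eq_of_mul_eq_one_right hb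
  have memS : ∀ g, g ∈ (b * ·) '' H ∪ K ↔ b * g ∈ H ∨ g ∈ K := fun g => by
    rw [Set.mem_union, mem_image_mul_left_iff_of_mul_self hb]
  have memT : ∀ g, g ∈ (b * ·) '' H ∪ (b * ·) '' K ↔ b * g ∈ H ∨ b * g ∈ K := fun g => by
    rw [Set.mem_union, mem_image_mul_left_iff_of_mul_self hb,
      mem_image_mul_left_iff_of_mul_self hb]
  have hbmul : ∀ g, b * g ∈ N ↔ g ∈ N := fun g => Subgroup.mul_mem_cancel_left _ hbN
  have hmulb : ∀ g, g * b ∈ N ↔ g ∈ N := fun g => Subgroup.mul_mem_cancel_right _ hbN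
  have notH : ∀ {g}, g ∉ N → g ∉ H := fun hg hgH => hg (hHN hgH)
  have notK : ∀ {g}, g ∈ N → g ∉ K := fun hg hgK => hKN _ hgK hg
  refine ⟨⟨(mulLeftOffSubgroup_involutive hbN hb).toPerm, fun {x y} => ?_⟩⟩
  obtain ⟨g, rfl⟩ : ∃ g, y = g * x := ⟨y * x⁻¹, by group⟩
  have hgx : g * x ∈ N ↔ (g ∈ N ↔ x ∈ N) := Subgroup.mul_mem_iff_of_index_two hN
  have hbb : ∀ g, b * (b * g) = g := fun g => by rw [← mul_assoc, hb, one_mul]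
  simp only [cayRel, Function.Involutive.coe_toPerm, mulLeftOffSubgroup, memS, memT]
  -- the arc `x → g * x` is sent to the arc with label `g`, `b * g`, `b * g * b` or `g * b`
  by_cases hx : x ∈ N <;> by_cases hg : g ∈ N <;>
    simp only [hx, hg, iff_true, iff_false, not_true_eq_false] at hgx <;>
    simp only [hx, hgx, if_true, if_false, mul_inv_rev, hb', mul_assoc, mul_inv_cancel, mul_one,
      mul_inv_cancel_left, hbb]
  · exact or_congr_right (iff_of_false (notK ((hbmul g).2 hg)) (notK hg))
  · exact or_congr_left (iff_of_false (notH hg) (notH (mt (hbmul g).1 hg)))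
  · exact or_congr (by rw [← hHb (b * g), hbb]) (iff_of_false (notK ((hmulb g).2 hg)) (notK hg))
  · refine or_congr (iff_of_false ?_ (notH (mt (hbmul g).1 hg))) (by rw [← mul_assoc, hKb])
    exact notH (mt ((hmulb g).1 ∘ (hbmul _).1) hg)

end IndexTwo

namespace DihedralGroup

variable {n : ℕ}

def parity (hn : 2 ∣ n) : DihedralGroup n →* Multiplicative (ZMod 2) where
  toFun
    | r i => .ofAdd (ZMod.castHom hn _ i)
    | sr i => .ofAdd (ZMod.castHom hn _ i)
  map_one' := by rw [one_def]; simp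
  map_mul' := by
    rintro (i | i) (j | j) <;>
      simp only [r_mul_r, r_mul_sr, sr_mul_r, sr_mul_sr, map_add, sub_eq_add_neg,
        map_neg, ZMod.neg_eq_self_mod_two, ← ofAdd_add, add_comm]

lemma parity_surjective (hn : 2 ∣ n) : Function.Surjective (parity hn) := by
  intro z
  refine ⟨r (z.toAdd.val : ZMod n), ?_⟩
  simp only [parity, MonoidHom.coe_mk, OneHom.coe_mk, map_natCast, ZMod.natCast_zmod_val,
    ofAdd_toAdd]

lemma index_ker_parity (hn : 2 ∣ n) : (parity hn).ker.index = 2 := by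
  rw [Subgroup.index_ker, (MonoidHom.range_eq_top.2 (parity_surjective hn)), Subgroup.card_top]
  simp

lemma r_mem_ker_parity (hn : 2 ∣ n) (i : ZMod n) :
    r i ∈ (parity hn).ker ↔ ZMod.castHom hn (ZMod 2) i = 0 :=
  MonoidHom.mem_ker.trans ofAdd_eq_one

lemma zpowers_r_two_le_ker_parity (hn : 2 ∣ n) : Subgroup.zpowers (r 2) ≤ (parity hn).ker := by
  rw [Subgroup.zpowers_le, r_mem_ker_parity, map_ofNat]
  decide

lemma r_one_notMem_ker_parity (hn : 2 ∣ n) : r 1 ∉ (parity hn).ker := by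
  rw [r_mem_ker_parity, map_one]
  decide

lemma notMem_ker_parity_of_mem_r_one_mul_zpowers (hn : 2 ∣ n) {g : DihedralGroup n}
    (hg : g ∈ (r 1 * ·) '' (Subgroup.zpowers (r (2 : ZMod n)) : Set (DihedralGroup n))) :
    g ∉ (parity hn).ker := by
  obtain ⟨_, hz, rfl⟩ := hg
  rw [Subgroup.mul_mem_cancel_right _ (zpowers_r_two_le_ker_parity hn hz)]
  exact r_one_notMem_ker_parity hn

lemma sr_zero_mem_ker_parity (hn : 2 ∣ n) : sr 0 ∈ (parity hn).ker :=
  MonoidHom.mem_ker.2 (ofAdd_eq_one.2 (map_zero _))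

lemma zpowers_subset_range_r (i : ZMod n) :
    (Subgroup.zpowers (r i) : Set (DihedralGroup n)) ⊆ Set.range r := by
  rintro _ ⟨k, rfl⟩
  exact ⟨_, (r_zpow i k).symm⟩

lemma image_r_mul_subset_range_r (i : ZMod n) {X : Set (DihedralGroup n)}
    (hX : X ⊆ Set.range r) : (r i * ·) '' X ⊆ Set.range r := by
  rintro _ ⟨_, hx, rfl⟩
  obtain ⟨j, rfl⟩ := hX hx
  exact ⟨i + j, (r_mul_r i j).symm⟩

lemma image_sr_zero_mul_range_r :
    (sr 0 * ·) '' Set.range (r : ZMod n → DihedralGroup n) = Set.range sr := by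
  rw [← Set.range_comp]
  congr 1
  funext i
  simp [sr_mul_r]

lemma one_notMem_range_sr : (1 : DihedralGroup n) ∉ Set.range sr := by
  rintro ⟨j, hj⟩
  cases hj

lemma sr_zero_mul_mul_sr_zero_mem_iff {X : Set (DihedralGroup n)} (hX : X ⊆ Set.range r)
    (hXinv : X⁻¹ = X) (g : DihedralGroup n) : sr 0 * g * sr 0 ∈ X ↔ g ∈ X := by
  rcases g with i | i
  · rw [sr_mul_r, sr_mul_sr, zero_add, zero_sub, ← inv_r, ← Set.mem_inv, hXinv]
  · have hsr : ∀ j, sr j ∉ X := fun j h => by obtain ⟨_, h'⟩ := hX h; cases h'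
    exact iff_of_false (hsr _) (hsr _)

lemma r_mem_center_of_mul_self {i : ZMod n} (h : r i * r i = 1) :
    r i ∈ Set.center (DihedralGroup n) := by
  rw [r_mul_r, one_def, r.injEq, ← eq_neg_iff_add_eq_zero] at h
  refine Semigroup.mem_center_iff.2 fun g => ?_
  rcases g with j | j
  · rw [r_mul_r, r_mul_r, add_comm]
  · rw [sr_mul_r, r_mul_sr, sub_eq_add_neg, ← h]

lemma sr_notMem_center (hn : 3 ≤ n) (j : ZMod n) : sr j ∉ Set.center (DihedralGroup n) := by
  intro h
  have h1 := Semigroup.mem_center_iff.1 h (r 1)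
  rw [r_mul_sr, sr_mul_r, sr.injEq, sub_eq_add_neg, add_right_inj, neg_eq_iff_add_eq_zero,
    one_add_one_eq_two, ← Nat.cast_ofNat, ZMod.natCast_eq_zero_iff] at h1
  have := Nat.le_of_dvd two_pos h1
  omega

theorem mulEquiv_r_ne_sr {m : ℕ} (hm : 3 ≤ m) (α : DihedralGroup n ≃* DihedralGroup m)
    (i : ZMod n) (j : ZMod m) : α (r i) ≠ sr j := by
  intro h
  have hsq : r i * r i = 1 := α.injective (by rw [map_mul, h, sr_mul_self, map_one])
  exact sr_notMem_center hm j (h ▸ MulEquivClass.apply_mem_center α (r_mem_center_of_mul_self hsq))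

end DihedralGroup

open DihedralGroup

/-- For `n ≥ 4` even, `H ⊆ ⟨a²⟩`, `K ⊆ a⟨a²⟩` inverse-closed and
`S = bH ∪ K`, if `D_{2n}` has the `|S|`-DCI property then `K = ∅`. -/
theorem stmt7 (n : ℕ) (hn : 4 ≤ n) (heven : Even n)
    (H K : Set (DihedralGroup n))
    (hH : H ⊆ (Subgroup.zpowers (DihedralGroup.r (2 : ZMod n)) : Set (DihedralGroup n)))
    (hK : K ⊆ (DihedralGroup.r (1 : ZMod n) * ·) ''
          (Subgroup.zpowers (DihedralGroup.r (2 : ZMod n)) : Set (DihedralGroup n)))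
    (hHinv : H⁻¹ = H) (hKinv : K⁻¹ = K)
    (hDCI : HasDCI (DihedralGroup n)
      (((DihedralGroup.sr (0 : ZMod n) * ·) '' H ∪ K).ncard)) :
    K = ∅ := by
  have hd : 2 ∣ n := heven.two_dvd
  have hHr : H ⊆ Set.range r := hH.trans (zpowers_subset_range_r 2)
  have hKr : K ⊆ Set.range r := hK.trans (image_r_mul_subset_range_r 1 (zpowers_subset_range_r 2))
  have hKodd : ∀ k ∈ K, k ∉ (parity hd).ker :=
    fun _ hk => notMem_ker_parity_of_mem_r_one_mul_zpowers hd (hK hk)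
  have hTsr : (sr 0 * ·) '' H ∪ (sr 0 * ·) '' K ⊆ Set.range sr := by
    rw [← Set.image_union, ← image_sr_zero_mul_range_r]
    exact Set.image_mono (Set.union_subset hHr hKr)
  have h1S : (1 : DihedralGroup n) ∉ (sr 0 * ·) '' H ∪ K := by
    rintro (h1 | h1)
    · exact one_notMem_range_sr (hTsr (Or.inl h1))
    · exact hKodd 1 h1 (one_mem _)
  obtain ⟨α, hα⟩ := hDCI _ h1S rfl _ (one_notMem_range_sr <| hTsr ·)
    (nonempty_relIso_cayRel_of_index_two (index_ker_parity hd) (sr_zero_mem_ker_parity hd)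
      (sr_mul_self 0) (hH.trans (zpowers_r_two_le_ker_parity hd)) hKodd
      (sr_zero_mul_mul_sr_zero_mem_iff hHr hHinv) (sr_zero_mul_mul_sr_zero_mem_iff hKr hKinv))
  refine Set.eq_empty_of_forall_notMem fun k hk => ?_
  obtain ⟨i, rfl⟩ := hKr hk
  obtain ⟨j, hj⟩ := hTsr (hα ▸ Set.mem_image_of_mem α (Or.inr hk))
  exact mulEquiv_r_ne_sr (by omega) α i j hj.symm
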